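/- arXiv:2604.20005 — 7 statements merged into one kernel-verified Lean document; each statement's English description precedes it below -/
import Mathlib

section
/- Let R be a commutative ring of characteristic p with Frobenius image R^p. If x = x_1,...,x_n is a p-generating set of R (i.e. R = R^p[x_1,...,x_n]) and R' = R[X_1,...,X_n]/(X_i^p - x_i), then the ring homomorphism φ : R' → R determined by sending the coefficient r ∈ R to r^p and the class of X_i to x_i is surjective, the inclusion ι : R → R' satisfies ι ∘ φ = Frobenius of R' and φ ∘ ι = Frobenius of R. -/
/-- **Gabber's first-step construction.**
If `x = x_1, …, x_n` is a `p`-generating set of a commutative ring `R` of characteristic `p`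
(i.e. `R = R^p[x_1, …, x_n]`) and `R' = R[X_1, …, X_n]/(X_i^p - x_i)`, then the ring map
`φ : R' → R` determined by `r ↦ r^p` on coefficients and `X̄_i ↦ x_i` exists, is surjective,
and satisfies `φ ∘ ι = F_R` and `ι ∘ φ = F_{R'}`, where `ι : R → R'` is the inclusion
`r ↦ r` (i.e. the class of the constant polynomial). -/
theorem gabber_first_step {R : Type*} [CommRing R] (p : ℕ) [Fact p.Prime] [CharP R p]
    (n : ℕ) (x : Fin n → R)
    (hgen : Subring.closure (Set.range (fun r : R => r ^ p) ∪ Set.range x) = ⊤)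
    (I : Ideal (MvPolynomial (Fin n) R))
    (hI : I = Ideal.span (Set.range fun i => MvPolynomial.X i ^ p - MvPolynomial.C (x i))) :
    ∃ φ : (MvPolynomial (Fin n) R ⧸ I) →+* R,
      (∀ r : R, φ (Ideal.Quotient.mk I (MvPolynomial.C r)) = r ^ p) ∧
      (∀ i : Fin n, φ (Ideal.Quotient.mk I (MvPolynomial.X i)) = x i) ∧
      Function.Surjective φ ∧
      (∀ a : MvPolynomial (Fin n) R ⧸ I,
        Ideal.Quotient.mk I (MvPolynomial.C (φ a)) = a ^ p) := by
  set f : MvPolynomial (Fin n) R →+* R := MvPolynomial.eval₂Hom (frobenius R p) x with hf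
  have hkill : ∀ a ∈ I, f a = 0 := by
    intro a ha
    have hle : I ≤ RingHom.ker f := by
      rw [hI, Ideal.span_le]
      rintro _ ⟨i, rfl⟩
      simp [RingHom.mem_ker, f, frobenius_def]
    exact hle ha
  refine ⟨Ideal.Quotient.lift I f hkill, ?_, ?_, ?_, ?_⟩
  · intro r; simp [f, frobenius_def]
  · intro i; simp [f]
  · set φ := Ideal.Quotient.lift I f hkill
    intro r
    have hr : r ∈ Subring.closure (Set.range (fun r : R => r ^ p) ∪ Set.range x) := by
      rw [hgen]; trivial
    have : Set.range (fun r : R => r ^ p) ∪ Set.range x ⊆ (φ.range : Set R) := by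
      rintro _ (⟨s, rfl⟩ | ⟨i, rfl⟩)
      · exact ⟨Ideal.Quotient.mk I (MvPolynomial.C s), by simp [φ, f, frobenius_def]⟩
      · exact ⟨Ideal.Quotient.mk I (MvPolynomial.X i), by simp [φ, f]⟩
    have := (Subring.closure_le.2 this) hr
    obtain ⟨a, ha⟩ := this
    exact ⟨a, ha⟩
  · set φ := Ideal.Quotient.lift I f hkill
    have hψ : (((Ideal.Quotient.mk I).comp
          (MvPolynomial.C : R →+* MvPolynomial (Fin n) R)).comp φ).comp (Ideal.Quotient.mk I)
        = (Ideal.Quotient.mk I).comp (frobenius (MvPolynomial (Fin n) R) p) := by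
      apply MvPolynomial.ringHom_ext
      · intro r
        simp only [RingHom.comp_apply, frobenius_def]
        have h1 : φ (Ideal.Quotient.mk I (MvPolynomial.C r)) = r ^ p := by
          simp [φ, f, frobenius_def]
        rw [h1, map_pow, map_pow]
      · intro i
        have hmem : MvPolynomial.X (σ := Fin n) i ^ p - MvPolynomial.C (x i) ∈ I := by
          rw [hI]; exact Ideal.subset_span ⟨i, rfl⟩
        have h2 : Ideal.Quotient.mk I (MvPolynomial.C (x i))
            = Ideal.Quotient.mk I (MvPolynomial.X i ^ p) := by
          rw [Ideal.Quotient.mk_eq_mk_iff_sub_mem]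
          simpa using I.neg_mem hmem
        simp only [RingHom.comp_apply, frobenius_def]
        have h3 : φ (Ideal.Quotient.mk I (MvPolynomial.X i)) = x i := by simp [φ, f]
        rw [h3, h2]
    intro a
    obtain ⟨q, rfl⟩ := Ideal.Quotient.mk_surjective a
    have := congrArg (fun g : _ →+* _ => g q) hψ
    simpa [frobenius_def, map_pow] using this
end

section
/- Let R be a commutative ring of characteristic p with p-generating set x = x_1,...,x_n, and let R' = R[X_1,...,X_n]/(X_i^p - x_i) with maps ι : R → R' and φ : R' → R as in Gabber's first-step construction. Then R is reduced and x_1,...,x_n form a p-basis of R if and only if φ : R' → R is an isomorphism. -/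
/-!
In `R' = R[X]/(X_i^p - x_i)` every class has a unique representative `∑_b c_b X^b` with all
`b_i < p`: existence by rewriting `X_i^p` as `x_i`, uniqueness because this rewriting is a
well-defined `R`-linear map that kills the ideal. Since `φ (∑_b c_b X^b) = ∑_b c_b^p x^b`,
the map `φ` is injective iff `c ↦ ∑_b c_b^p x^b` is, i.e. iff Frobenius is injective (`R` is
reduced) and the `x^b` are linearly independent over `R^p`. It is always surjective, as `x` is
a `p`-generating set.
-/

/-- The image of the Frobenius `r ↦ r^p` of `R`, as a subring. -/
def pPowers (R : Type*) [CommRing R] (p : ℕ) : Subring R :=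
  Subring.closure (Set.range fun r : R => r ^ p)

open MvPolynomial

lemma pPowers_eq_range_frobenius (R : Type*) [CommRing R] (p : ℕ) [ExpChar R p] :
    pPowers R p = (frobenius R p).range := by
  rw [pPowers, ← Subring.closure_eq (frobenius R p).range, RingHom.coe_range]
  rfl

theorem injective_sum_pow_mul_iff {R ι : Type*} [CommRing R] [Fintype ι] [Nonempty ι]
    (p : ℕ) [Fact p.Prime] [CharP R p] (v : ι → R) :
    Function.Injective (fun c : ι → R => ∑ i, c i ^ p * v i) ↔
      IsReduced R ∧ LinearIndependent (pPowers R p) v := by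
  have hp := (Fact.out : p.Prime)
  rw [Fintype.linearIndependent_iff, isReduced_iff_pow_one_lt p hp.one_lt]
  constructor
  · intro hinj
    have hzero (c : ι → R) (hc : ∑ i, c i ^ p * v i = 0) : c = 0 :=
      hinj (by simpa [zero_pow hp.ne_zero] using hc)
    refine ⟨fun r hr => ?_, fun a ha i => ?_⟩
    · obtain ⟨i⟩ := ‹Nonempty ι›
      exact congrFun (hzero (fun _ => r) (by simp [hr])) i
    · have hroot (j : ι) : ∃ c : R, c ^ p = a j := by
        simpa [pPowers_eq_range_frobenius, frobenius_def] using (a j).2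
      choose c hc using hroot
      have hc0 := hzero c (by simpa [hc, Subring.smul_def] using ha)
      ext
      simp [← hc, hc0, zero_pow hp.ne_zero]
  · rintro ⟨hred, hli⟩ c d hcd
    funext i
    rw [← sub_eq_zero]
    refine hred _ (congrArg Subtype.val (hli (fun j => ⟨(c j - d j) ^ p, ?_⟩) ?_ i))
    · exact Subring.subset_closure ⟨_, rfl⟩
    · simpa [Subring.smul_def, sub_pow_char, sub_mul, sub_eq_zero] using hcd

section NormalForm

variable {R : Type*} [CommRing R] {n : ℕ} (p : ℕ) (x : Fin n → R)

noncomputable def pRootIdeal : Ideal (MvPolynomial (Fin n) R) :=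
  Ideal.span (Set.range fun i => X i ^ p - C (x i))

lemma mk_X_pow_eq_mk_C (i : Fin n) :
    Ideal.Quotient.mk (pRootIdeal p x) (X i) ^ p =
      Ideal.Quotient.mk (pRootIdeal p x) (C (x i)) := by
  rw [← map_pow, Ideal.Quotient.mk_eq_mk_iff_sub_mem]
  exact Ideal.subset_span ⟨i, rfl⟩

variable {p}

noncomputable def boundedExponent (b : Fin n → Fin p) : Fin n →₀ ℕ :=
  Finsupp.equivFunOnFinite.symm fun i => b i

@[simp] lemma boundedExponent_apply (b : Fin n → Fin p) (i : Fin n) :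
    boundedExponent b i = b i := rfl

variable (p) [NeZero p]

/-- The coordinates of the class of a polynomial in `R[X]/(X_i^p - x_i)` on the basis
`X^b`, `b_i < p`: writing `a_i = p q_i + b_i`, the monomial `c X^a` reduces to `c x^q X^b`. -/
noncomputable def normalForm : MvPolynomial (Fin n) R →ₗ[R] (Fin n → Fin p) → R :=
  (basisMonomials (Fin n) R).constr R
    fun a => (∏ i, x i ^ (a i / p)) • Pi.single (fun i => Fin.ofNat p (a i)) 1

lemma normalForm_monomial (a : Fin n →₀ ℕ) (c : R) :
    normalForm p x (monomial a c) =
      (c * ∏ i, x i ^ (a i / p)) • Pi.single (fun i => Fin.ofNat p (a i)) 1 := by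
  have hsmul : monomial a c = c • basisMonomials (Fin n) R a := by simp [smul_monomial]
  rw [hsmul, map_smul, normalForm, Module.Basis.constr_basis, mul_smul]

lemma normalForm_mul_sub (g : MvPolynomial (Fin n) R) (i : Fin n) :
    normalForm p x (g * (X i ^ p - C (x i))) = 0 := by
  induction g using MvPolynomial.induction_on' with
  | add f g hf hg => rw [add_mul, map_add, hf, hg, add_zero]
  | monomial a c =>
    have hdigits : (fun j => Fin.ofNat p ((a + Finsupp.single i p) j)) =
        fun j => Fin.ofNat p (a j) := by
      funext j
      by_cases h : i = j <;> simp [h, Fin.ext_iff]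
    have hweight :
        ∏ j, x j ^ ((a + Finsupp.single i p) j / p) = x i * ∏ j, x j ^ (a j / p) := by
      have hexp (j : Fin n) :
          (a + Finsupp.single i p) j / p = a j / p + if i = j then 1 else 0 := by
        by_cases h : i = j
        · subst h; simp [Nat.add_div_right _ (NeZero.pos p)]
        · simp [h]
      simp only [hexp, pow_add, Finset.prod_mul_distrib, pow_ite, pow_one, pow_zero,
        Fintype.prod_ite_eq, mul_comm]
    rw [mul_sub, X_pow_eq_monomial, monomial_mul, mul_comm (monomial a c), C_mul_monomial,
      map_sub, normalForm_monomial, normalForm_monomial, mul_one, hdigits, hweight, sub_eq_zero]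
    rw [mul_left_comm, ← mul_assoc]

lemma normalForm_eq_zero_of_mem {f : MvPolynomial (Fin n) R} (hf : f ∈ pRootIdeal p x) :
    normalForm p x f = 0 := by
  obtain ⟨g, rfl⟩ := Ideal.mem_span_range_iff_exists_fun.mp hf
  simp only [map_sum, normalForm_mul_sub, Finset.sum_const_zero]

lemma normalForm_sum_monomial (c : (Fin n → Fin p) → R) :
    normalForm p x (∑ b, monomial (boundedExponent b) (c b)) = c := by
  ext b
  simp [normalForm_monomial, Pi.single_apply, Nat.div_eq_of_lt]

lemma mk_eq_mk_sum_normalForm (f : MvPolynomial (Fin n) R) :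
    Ideal.Quotient.mk (pRootIdeal p x) f =
      Ideal.Quotient.mk (pRootIdeal p x)
        (∑ b, monomial (boundedExponent b) (normalForm p x f b)) := by
  induction f using MvPolynomial.induction_on' with
  | add f g hf hg => simp only [map_add, hf, hg, Pi.add_apply, Finset.sum_add_distrib]
  | monomial a c =>
    have hsum : ∑ b, monomial (boundedExponent b) (normalForm p x (monomial a c) b) =
        monomial (boundedExponent fun i => Fin.ofNat p (a i)) (c * ∏ i, x i ^ (a i / p)) := by
      simp [normalForm_monomial, Pi.single_apply, apply_ite (monomial _)]
    rw [hsum, monomial_eq, monomial_eq, C_mul]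
    simp only [Finsupp.prod_fintype _ _ (fun i => pow_zero _), map_mul, map_prod, map_pow,
      boundedExponent_apply, Fin.val_ofNat, ← mk_X_pow_eq_mk_C, ← pow_mul]
    rw [mul_assoc, ← Finset.prod_mul_distrib]
    simp only [← pow_add, Nat.div_add_mod]

theorem bijective_mk_sum_monomial :
    Function.Bijective fun c : (Fin n → Fin p) → R =>
      Ideal.Quotient.mk (pRootIdeal p x) (∑ b, monomial (boundedExponent b) (c b)) := by
  refine ⟨fun c d hcd => ?_, fun z => ?_⟩
  · rw [Ideal.Quotient.mk_eq_mk_iff_sub_mem] at hcd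
    have hzero := normalForm_eq_zero_of_mem p x hcd
    rwa [map_sub, normalForm_sum_monomial, normalForm_sum_monomial, sub_eq_zero] at hzero
  · obtain ⟨f, rfl⟩ := Ideal.Quotient.mk_surjective z
    exact ⟨normalForm p x f, (mk_eq_mk_sum_normalForm p x f).symm⟩

end NormalForm

/-- Let `R` be of characteristic `p` with `p`-generating set `x = x_1, …, x_n` and
`R' = R[X_1, …, X_n]/(X_i^p - x_i)` with the map `φ : R' → R` of Gabber's first-step
construction (sending coefficients `r ↦ r^p` and `X̄_i ↦ x_i`).  Then `R` is reduced and
`x_1, …, x_n` form a `p`-basis of `R` (monomials `x^b`, `0 ≤ b_i ≤ p-1`, linearly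
independent over `R^p`) if and only if `φ` is an isomorphism. -/
theorem gabber_first_step_iso_iff {R : Type*} [CommRing R] (p : ℕ) [Fact p.Prime] [CharP R p]
    (n : ℕ) (x : Fin n → R)
    (hgen : Subring.closure (Set.range (fun r : R => r ^ p) ∪ Set.range x) = ⊤)
    (I : Ideal (MvPolynomial (Fin n) R))
    (hI : I = Ideal.span (Set.range fun i => MvPolynomial.X i ^ p - MvPolynomial.C (x i)))
    (φ : (MvPolynomial (Fin n) R ⧸ I) →+* R)
    (hφC : ∀ r : R, φ (Ideal.Quotient.mk I (MvPolynomial.C r)) = r ^ p)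
    (hφX : ∀ i : Fin n, φ (Ideal.Quotient.mk I (MvPolynomial.X i)) = x i) :
    (IsReduced R ∧
        LinearIndependent (pPowers R p) (fun b : Fin n → Fin p => ∏ i, x i ^ ((b i : ℕ))))
      ↔ Function.Bijective φ := by
  obtain rfl : I = pRootIdeal p x := hI
  have hsurj : Function.Surjective φ := by
    rw [← RingHom.range_eq_top, eq_top_iff, ← hgen, Subring.closure_le]
    rintro _ (⟨r, rfl⟩ | ⟨i, rfl⟩)
    exacts [⟨_, hφC r⟩, ⟨_, hφX i⟩]
  have hφ_sum (c : (Fin n → Fin p) → R) :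
      φ (Ideal.Quotient.mk (pRootIdeal p x) (∑ b, monomial (boundedExponent b) (c b))) =
        ∑ b, c b ^ p * ∏ i, x i ^ (b i : ℕ) := by
    simp [monomial_eq, Finsupp.prod_fintype, hφC, hφX]
  rw [← injective_sum_pow_mul_iff, funext fun c => (hφ_sum c).symm, ← Function.comp_def,
    Function.Injective.of_comp_iff' φ (bijective_mk_sum_monomial p x)]
  exact ⟨fun hinj => ⟨hinj, hsurj⟩, And.left⟩
end

section
/- Let R be a commutative ring of characteristic p with p-generating set x, let R' = R[X]/(X_i^p − x_i) with classes x'_i and map φ : R' → R as in Gabber's construction, and suppose ψ : S → R' is a ring map where S has a p-generating set y = y_1,...,y_m that ψ maps bijectively onto the p-basis x' of R'. Then ker ψ equals the Frobenius power (ker(φ ∘ ψ))^{[p]}, the ideal generated by p-th powers of elements of ker(φ ∘ ψ). -/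
/-!
Since `S = S^p[y]`, every `s : S` is a sum `∑ₑ cₑ^p yᵉ` over reduced exponents `e < p`. In `R'`
the Frobenius factors as `z ↦ φ(z)` viewed as a constant, so `ψ s` is the class of the reduced
polynomial `∑ₑ φ(ψ cₑ) Xᵉ`. Reduced monomials are linearly independent modulo the relations
`X_i^p = x_i`, as the functionals "coefficient of `X^f` in the normal form" show. Hence
`ψ s = 0` forces every `cₑ` into `ker (φ ∘ ψ)`, and `s ∈ (ker (φ ∘ ψ))^{[p]}`; the converse is
`ψ (t^p) = φ(ψ t) = 0`.
-/

open MvPolynomial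

theorem Finset.prod_pow_eq_pow_mul_prod_pow_mod {M ι : Type*} [CommMonoid M] [Fintype ι] (p : ℕ)
    (y : ι → M) (k : ι → ℕ) :
    ∏ j, y j ^ k j = (∏ j, y j ^ (k j / p)) ^ p * ∏ j, y j ^ (k j % p) := by
  rw [← Finset.prod_pow, ← Finset.prod_mul_distrib]
  refine Finset.prod_congr rfl fun j _ => ?_
  rw [← pow_mul, ← pow_add, Nat.div_add_mod']

theorem exists_eq_sum_pow_mul_prod_pow {S ι : Type*} [CommRing S] [Fintype ι] [DecidableEq ι]
    (p : ℕ) [Fact p.Prime] [CharP S p] (y : ι → S)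
    (hgen : Subring.closure (Set.range (fun s : S => s ^ p) ∪ Set.range y) = ⊤) (s : S) :
    ∃ c : (ι → Fin p) → S, s = ∑ e, c e ^ p * ∏ j, y j ^ (e j : ℕ) := by
  have hp : p.Prime := Fact.out
  let A := (frobenius S p).range
  let M : Submodule A S := Submodule.span A (Set.range fun e : ι → Fin p => ∏ j, y j ^ (e j : ℕ))
  have pow_smul_mem : ∀ (b : S) {v}, v ∈ M → b ^ p * v ∈ M := fun b _ hv =>
    M.smul_mem ⟨b ^ p, b, rfl⟩ hv
  have prod_pow_mem : ∀ k : ι → ℕ, ∏ j, y j ^ k j ∈ M := fun k => by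
    rw [Finset.prod_pow_eq_pow_mul_prod_pow_mod p y k]
    exact pow_smul_mem _ (Submodule.subset_span ⟨fun j => ⟨k j % p, Nat.mod_lt _ hp.pos⟩, rfl⟩)
  have mul_mem : ∀ a b, a ∈ M → b ∈ M → a * b ∈ M := by
    suffices M * M ≤ M from fun a b ha hb => this (Submodule.mul_mem_mul ha hb)
    rw [Submodule.span_mul_span, Submodule.span_le]
    rintro _ ⟨_, ⟨e, rfl⟩, _, ⟨f, rfl⟩, rfl⟩
    simpa only [SetLike.mem_coe, ← Finset.prod_mul_distrib, ← pow_add] using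
      prod_pow_mem fun j => e j + f j
  have one_mem : (1 : S) ∈ M := by simpa using prod_pow_mem 0
  have hs : s ∈ M := by
    have : Subring.closure (Set.range (fun s : S => s ^ p) ∪ Set.range y) ≤
        (M.toSubalgebra one_mem mul_mem).toSubring := by
      rw [Subring.closure_le, Set.union_subset_iff]
      constructor
      · rintro _ ⟨b, rfl⟩
        simpa using pow_smul_mem b one_mem
      · rintro _ ⟨j, rfl⟩
        simpa [Pi.single_apply, pow_ite, Finset.prod_ite_eq'] using prod_pow_mem (Pi.single j 1)
    exact this (hgen ▸ Subring.mem_top s)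
  obtain ⟨a, rfl⟩ := (Submodule.mem_span_range_iff_exists_fun A).mp hs
  choose c hc using fun e => (a e).2
  exact ⟨c, Finset.sum_congr rfl fun e _ => by rw [Subring.smul_def, ← hc e, frobenius_def]; rfl⟩

namespace MvPolynomial

section ReducedCoeff

variable {R σ : Type*} [CommRing R] [Fintype σ] (p : ℕ) (x : σ → R)

/-- The coefficient of the reduced monomial `X^f` in the normal form of `X^a` modulo the
relations `X_i^p = x_i`. -/
def reducedMonomialCoeff (f : σ → Fin p) (a : σ →₀ ℕ) : R :=
  if ∀ i, a i % p = f i then ∏ i, x i ^ (a i / p) else 0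

noncomputable def reducedCoeff (f : σ → Fin p) : MvPolynomial σ R →ₗ[R] R :=
  (basisMonomials σ R).constr R (reducedMonomialCoeff p x f)

variable {p}

theorem reducedCoeff_monomial (f : σ → Fin p) (a : σ →₀ ℕ) (r : R) :
    reducedCoeff p x f (monomial a r) = r * reducedMonomialCoeff p x f a := by
  rw [show monomial a r = r • monomial a 1 by rw [smul_monomial, smul_eq_mul, mul_one], map_smul,
    smul_eq_mul]
  congr 1
  rw [reducedCoeff]
  simpa using (basisMonomials σ R).constr_basis R (reducedMonomialCoeff p x f) a

theorem reducedMonomialCoeff_add_single (hp : 0 < p) (f : σ → Fin p) (a : σ →₀ ℕ) (i : σ) :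
    reducedMonomialCoeff p x f (a + Finsupp.single i p) = reducedMonomialCoeff p x f a * x i := by
  classical
  have hmod : ∀ j, (a + Finsupp.single i p) j % p = a j % p := fun j => by
    rcases eq_or_ne j i with rfl | h <;> simp [*]
  have hdiv : ∀ j, (a + Finsupp.single i p) j / p = a j / p + if j = i then 1 else 0 := fun j => by
    rcases eq_or_ne j i with rfl | h <;> simp [Nat.add_div_right _ hp, *]
  simp only [reducedMonomialCoeff, hmod, hdiv, pow_add, Finset.prod_mul_distrib, pow_ite, pow_one,
    pow_zero, Finset.prod_ite_eq', Finset.mem_univ, if_true]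
  split_ifs <;> simp

theorem reducedCoeff_mul_X_pow_sub_C (hp : 0 < p) (f : σ → Fin p) (q : MvPolynomial σ R) (i : σ) :
    reducedCoeff p x f (q * (X i ^ p - C (x i))) = 0 := by
  induction q using MvPolynomial.induction_on' with
  | monomial a r =>
    rw [mul_sub, map_sub, X_pow_eq_monomial, monomial_mul, mul_one, C_apply, monomial_mul,
      add_zero, reducedCoeff_monomial, reducedCoeff_monomial,
      reducedMonomialCoeff_add_single x hp, sub_eq_zero]
    ring
  | add q₁ q₂ h₁ h₂ => rw [add_mul, map_add, h₁, h₂, add_zero]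

theorem reducedCoeff_eq_zero_of_mem (hp : 0 < p) (f : σ → Fin p) {q : MvPolynomial σ R}
    (hq : q ∈ Ideal.span (Set.range fun i => X i ^ p - C (x i))) : reducedCoeff p x f q = 0 := by
  obtain ⟨c, rfl⟩ := Ideal.mem_span_range_iff_exists_fun.mp hq
  simp only [map_sum, reducedCoeff_mul_X_pow_sub_C x hp, Finset.sum_const_zero]

theorem reducedCoeff_C_mul_prod_X_pow (f e : σ → Fin p) (r : R) :
    reducedCoeff p x f (C r * ∏ i, X i ^ (e i : ℕ)) = if e = f then r else 0 := by
  have : C r * ∏ i, X i ^ (e i : ℕ) =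
      monomial (Finsupp.equivFunOnFinite.symm fun i => (e i : ℕ)) r := by
    rw [monomial_eq, Finsupp.prod_fintype _ _ fun _ => pow_zero _]
    rfl
  have hlt : ∀ i, (e i : ℕ) < p := fun i => (e i).2
  simp only [this, reducedCoeff_monomial, reducedMonomialCoeff, Finsupp.coe_equivFunOnFinite_symm,
    Nat.mod_eq_of_lt (hlt _), Nat.div_eq_of_lt (hlt _), pow_zero, Finset.prod_const_one,
    Fin.val_inj, mul_ite, mul_one, mul_zero]
  exact if_congr _root_.funext_iff.symm rfl rfl

theorem eq_zero_of_sum_C_mul_prod_X_pow_mem [DecidableEq σ] (hp : 0 < p) (r : (σ → Fin p) → R)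
    (h : ∑ e, C (r e) * ∏ i, X i ^ (e i : ℕ) ∈ Ideal.span (Set.range fun i => X i ^ p - C (x i))) :
    r = 0 := by
  funext f
  simpa [reducedCoeff_C_mul_prod_X_pow] using reducedCoeff_eq_zero_of_mem x hp f h

end ReducedCoeff

theorem pow_char_eq_mk_C {R σ : Type*} [CommRing R] (p : ℕ) [Fact p.Prime] [CharP R p]
    (x : σ → R) {I : Ideal (MvPolynomial σ R)} (hI : ∀ i, X i ^ p - C (x i) ∈ I)
    (φ : MvPolynomial σ R ⧸ I →+* R) (hφC : ∀ r, φ (Ideal.Quotient.mk I (C r)) = r ^ p)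
    (hφX : ∀ i, φ (Ideal.Quotient.mk I (X i)) = x i) (z : MvPolynomial σ R ⧸ I) :
    z ^ p = Ideal.Quotient.mk I (C (φ z)) := by
  obtain ⟨q, rfl⟩ := Ideal.Quotient.mk_surjective z
  have : (Ideal.Quotient.mk I).comp (frobenius _ p) =
      (Ideal.Quotient.mk I).comp (C.comp (φ.comp (Ideal.Quotient.mk I))) := by
    refine ringHom_ext (fun r => by simp [frobenius_def, hφC]) fun i => ?_
    simpa [frobenius_def, hφX] using Ideal.Quotient.eq.mpr (hI i)
  simpa [frobenius_def] using congr($this q)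

end MvPolynomial

theorem gabber_first_step_ker_frobenius_power_general {R S : Type*} [CommRing R] [CommRing S]
    (p : ℕ) [Fact p.Prime] [CharP R p] [CharP S p]
    (n m : ℕ) (x : Fin n → R)
    (I : Ideal (MvPolynomial (Fin n) R))
    (hI : I = Ideal.span (Set.range fun i => MvPolynomial.X i ^ p - MvPolynomial.C (x i)))
    (φ : (MvPolynomial (Fin n) R ⧸ I) →+* R)
    (hφC : ∀ r : R, φ (Ideal.Quotient.mk I (MvPolynomial.C r)) = r ^ p)
    (hφX : ∀ i : Fin n, φ (Ideal.Quotient.mk I (MvPolynomial.X i)) = x i)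
    (y : Fin m → S)
    (hgenS : Subring.closure (Set.range (fun s : S => s ^ p) ∪ Set.range y) = ⊤)
    (ψ : S →+* (MvPolynomial (Fin n) R ⧸ I)) (σ : Fin m ≃ Fin n)
    (hψ : ∀ j : Fin m, ψ (y j) = Ideal.Quotient.mk I (MvPolynomial.X (σ j))) :
    RingHom.ker ψ =
      Ideal.span ((fun a : S => a ^ p) '' (RingHom.ker (φ.comp ψ) : Set S)) := by
  have hXI : ∀ i, X i ^ p - C (x i) ∈ I := fun i => hI ▸ Ideal.subset_span ⟨i, rfl⟩
  have hpow := pow_char_eq_mk_C p x hXI φ hφC hφX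
  apply le_antisymm
  · intro s hs
    have hgen : Subring.closure (Set.range (fun s : S => s ^ p) ∪ Set.range (y ∘ σ.symm)) = ⊤ := by
      rwa [σ.symm.surjective.range_comp]
    obtain ⟨c, rfl⟩ := exists_eq_sum_pow_mul_prod_pow p (y ∘ σ.symm) hgen s
    have hψs : ψ (∑ e, c e ^ p * ∏ i, (y ∘ σ.symm) i ^ (e i : ℕ)) =
        Ideal.Quotient.mk I (∑ e, C (φ (ψ (c e))) * ∏ i, X i ^ (e i : ℕ)) := by
      simp [hpow, hψ]
    have hmem : ∑ e, C (φ (ψ (c e))) * ∏ i, X i ^ (e i : ℕ) ∈ I := by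
      rw [← Ideal.Quotient.eq_zero_iff_mem, ← hψs]
      exact hs
    have hc := eq_zero_of_sum_C_mul_prod_X_pow_mem x (Fact.out : p.Prime).pos _ (by rwa [← hI])
    exact Ideal.sum_mem _ fun e _ =>
      Ideal.mul_mem_right _ _ (Ideal.subset_span ⟨c e, congr_fun hc e, rfl⟩)
  · rw [Ideal.span_le]
    rintro _ ⟨t, ht, rfl⟩
    rw [SetLike.mem_coe, RingHom.mem_ker] at ht ⊢
    rw [map_pow, hpow, ← RingHom.comp_apply φ ψ, ht, map_zero, map_zero]

/-- Let `R` be of characteristic `p` with `p`-generating set `x`, let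
`R' = R[X]/(X_i^p − x_i)` with classes `x'_i = X̄_i` and the map `φ : R' → R` of Gabber's
construction.  If `ψ : S → R'` is a ring map from a ring `S` with `p`-generating set
`y = y_1, …, y_m` which `ψ` maps bijectively onto the `p`-basis `x'` of `R'`, then
`ker ψ = (ker (φ ∘ ψ))^{[p]}`, the ideal generated by `p`-th powers of elements of
`ker (φ ∘ ψ)`. -/
theorem gabber_first_step_ker_frobenius_power {R S : Type*} [CommRing R] [CommRing S]
    (p : ℕ) [Fact p.Prime] [CharP R p] [CharP S p]
    (n m : ℕ) (x : Fin n → R)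
    (hgenR : Subring.closure (Set.range (fun r : R => r ^ p) ∪ Set.range x) = ⊤)
    (I : Ideal (MvPolynomial (Fin n) R))
    (hI : I = Ideal.span (Set.range fun i => MvPolynomial.X i ^ p - MvPolynomial.C (x i)))
    (φ : (MvPolynomial (Fin n) R ⧸ I) →+* R)
    (hφC : ∀ r : R, φ (Ideal.Quotient.mk I (MvPolynomial.C r)) = r ^ p)
    (hφX : ∀ i : Fin n, φ (Ideal.Quotient.mk I (MvPolynomial.X i)) = x i)
    (y : Fin m → S)
    (hgenS : Subring.closure (Set.range (fun s : S => s ^ p) ∪ Set.range y) = ⊤)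
    (ψ : S →+* (MvPolynomial (Fin n) R ⧸ I)) (σ : Fin m ≃ Fin n)
    (hψ : ∀ j : Fin m, ψ (y j) = Ideal.Quotient.mk I (MvPolynomial.X (σ j))) :
    RingHom.ker ψ =
      Ideal.span ((fun a : S => a ^ p) '' (RingHom.ker (φ.comp ψ) : Set S)) :=
  gabber_first_step_ker_frobenius_power_general p n m x I hI φ hφC hφX y hgenS ψ σ hψ
end

section
/- Let A be a commutative ring of characteristic p with a finitely generated ideal I such that A is complete and separated with respect to the filtration by Frobenius powers I^{[p^e]} (i.e. A ≅ lim A/I^{[p^e]}), and suppose I = (g_1,...,g_m) + I^{[p]}. Then I = (g_1,...,g_m). -/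
/-- The Frobenius power `I^{[q]}`: the ideal generated by the `q`-th powers of the
elements of `I`. -/
def frobeniusPower {A : Type*} [CommRing A] (I : Ideal A) (q : ℕ) : Ideal A :=
  Ideal.span ((fun a : A => a ^ q) '' (I : Set A))

/-- Let `A` be a commutative ring of characteristic `p` with a finitely generated ideal `I`
such that `A` is complete and separated with respect to the filtration by Frobenius powers
`I^{[p^e]}` (i.e. `A ≅ lim A/I^{[p^e]}`: the intersection of the `I^{[p^e]}` is zero, and
every coherent sequence has a limit).  If `I = (g_1, …, g_m) + I^{[p]}`, then
`I = (g_1, …, g_m)`. -/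
theorem ideal_eq_span_of_frobenius_complete {A : Type*} [CommRing A]
    (p : ℕ) [Fact p.Prime] [CharP A p] (I : Ideal A) (hfg : I.FG)
    (hsep : (⨅ e : ℕ, frobeniusPower I (p ^ e)) = ⊥)
    (hcompl : ∀ a : ℕ → A, (∀ e, a (e + 1) - a e ∈ frobeniusPower I (p ^ e)) →
      ∃ b : A, ∀ e, b - a e ∈ frobeniusPower I (p ^ e))
    (m : ℕ) (g : Fin m → A) (hgI : ∀ i, g i ∈ I)
    (hgen : I = Ideal.span (Set.range g) ⊔ frobeniusPower I p) :
    I = Ideal.span (Set.range g) := by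
  have hp : p.Prime := Fact.out
  set F : ℕ → Ideal A := fun e => frobeniusPower I (p ^ e) with hF
  have hmap : ∀ e, F e = I.map (iterateFrobenius A p e) := by
    intro e
    show frobeniusPower I (p ^ e) = _
    unfold frobeniusPower Ideal.map
    congr 1
  have hgpow : ∀ (i : Fin m) e, g i ^ p ^ e ∈ F e :=
    fun i e => Ideal.subset_span ⟨g i, hgI i, rfl⟩
  have hmono : ∀ e, F (e + 1) ≤ F e := by
    intro e
    rw [show F (e+1) = frobeniusPower I (p ^ (e+1)) from rfl]
    apply Ideal.span_le.2
    rintro _ ⟨a, ha, rfl⟩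
    have heq : (a : A) ^ p ^ (e + 1) = (a ^ p) ^ p ^ e := by
      rw [← pow_mul, ← pow_succ']
    change a ^ p ^ (e + 1) ∈ F e
    rw [heq]
    exact Ideal.subset_span ⟨a ^ p, I.pow_mem_of_mem ha p hp.pos, rfl⟩
  have hiter : ∀ e, F e = Ideal.span (Set.range fun i => g i ^ p ^ e) ⊔ F (e + 1) := by
    intro e
    rw [hmap e, hmap (e+1)]
    conv_lhs => rw [hgen]
    rw [Ideal.map_sup]
    congr 1
    · rw [Ideal.map_span, ← Set.range_comp]
      simp [Function.comp_def, iterateFrobenius_def]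
    · have h1 : frobeniusPower I p = I.map (iterateFrobenius A p 1) := by
        unfold frobeniusPower Ideal.map
        congr 1
        ext y
        simp [iterateFrobenius_def, frobenius_def]
      rw [h1, Ideal.map_map]
      congr 1
      ext x
      simp [iterateFrobenius_def, frobenius_def, ← pow_mul, pow_succ']
  have hstep : ∀ e (y : A), y ∈ F e → ∃ c : Fin m → A,
      y - ∑ i, c i * g i ^ p ^ e ∈ F (e + 1) := by
    intro e y hy
    rw [hiter e] at hy
    obtain ⟨y₁, hy₁, y₂, hy₂, rfl⟩ := Submodule.mem_sup.1 hy
    obtain ⟨c, hc⟩ := (Submodule.mem_span_range_iff_exists_fun A).1 hy₁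
    refine ⟨c, ?_⟩
    have : y₁ + y₂ - ∑ i, c i * g i ^ p ^ e = y₂ := by
      rw [show (∑ i, c i * g i ^ p ^ e) = y₁ by simpa [smul_eq_mul] using hc]; ring
    rwa [this]
  choose cfun hcfun using hstep
  refine le_antisymm ?_ (Ideal.span_le.2 (by rintro _ ⟨i, rfl⟩; exact hgI i))
  intro x hx
  have hx0 : x ∈ F 0 := by
    have : F 0 = I := by
      show frobeniusPower I (p ^ 0) = I
      simp [frobeniusPower, Set.image_id']
    rwa [this]
  -- recursively defined remainders
  let rec' : ∀ e : ℕ, {y : A // y ∈ F e} := fun e =>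
    Nat.rec ⟨x, hx0⟩
      (fun e ih => ⟨ih.1 - ∑ i, cfun e ih.1 ih.2 i * g i ^ p ^ e, hcfun e ih.1 ih.2⟩) e
  set c : ℕ → Fin m → A := fun e => cfun e (rec' e).1 (rec' e).2 with hc
  set r : ℕ → A := fun e => (rec' e).1 with hr
  have hrmem : ∀ e, r e ∈ F e := fun e => (rec' e).2
  have hrsucc : ∀ e, r (e + 1) = r e - ∑ i, c e i * g i ^ p ^ e := fun e => rfl
  have hr0 : r 0 = x := rfl
  set s : Fin m → ℕ → A := fun i e => ∑ e' ∈ Finset.range e, c e' i * g i ^ (p ^ e' - 1)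
    with hs
  have hxr : ∀ e, x - ∑ i, s i e * g i = r e := by
    intro e
    induction e with
    | zero => simp [hs, hr0]
    | succ e ih =>
      rw [hrsucc e, ← ih]
      have : ∀ i : Fin m, s i (e + 1) * g i = s i e * g i + c e i * g i ^ p ^ e := by
        intro i
        rw [hs]
        simp only [Finset.sum_range_succ, add_mul, mul_assoc]
        congr 1
        congr 1
        rw [← pow_succ, Nat.sub_add_cancel (Nat.one_le_pow _ _ hp.pos)]
      simp only [this, Finset.sum_add_distrib]
      ring
  have hdiff : ∀ (i : Fin m) e, s i (e + 1 + 1) - s i (e + 1) ∈ F e := by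
    intro i e
    have : s i (e + 1 + 1) - s i (e + 1) = c (e + 1) i * g i ^ (p ^ (e + 1) - 1) := by
      rw [hs]; simp [Finset.sum_range_succ]
    rw [this]
    have hle : p ^ e ≤ p ^ (e + 1) - 1 :=
      Nat.le_sub_one_of_lt (Nat.pow_lt_pow_succ hp.one_lt)
    have : g i ^ (p ^ (e + 1) - 1) = g i ^ p ^ e * g i ^ (p ^ (e + 1) - 1 - p ^ e) := by
      rw [← pow_add, Nat.add_sub_cancel' hle]
    rw [this, ← mul_assoc]
    exact Ideal.mul_mem_right _ _ (Ideal.mul_mem_left _ _ (hgpow i e))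
  choose b hb using fun i => hcompl (fun e => s i (e + 1)) (hdiff i)
  have hfinal : x - ∑ i, b i * g i = 0 := by
    have : x - ∑ i, b i * g i ∈ ⨅ e : ℕ, frobeniusPower I (p ^ e) := by
      rw [Submodule.mem_iInf]
      intro e
      show x - ∑ i, b i * g i ∈ F e
      have key : x - ∑ i, b i * g i
          = r (e + 1) + ∑ i, (s i (e + 1) - b i) * g i := by
        rw [← hxr (e + 1)]
        simp only [sub_mul]
        rw [Finset.sum_sub_distrib]
        ring
      rw [key]
      refine Ideal.add_mem _ (hmono e (hrmem (e + 1))) (Ideal.sum_mem _ fun i _ => ?_)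
      have : s i (e + 1) - b i = -(b i - s i (e + 1)) := by ring
      rw [this]
      exact Ideal.mul_mem_right _ _ (Submodule.neg_mem _ (hb i e))
    rwa [hsep, Submodule.mem_bot] at this
  have : x = ∑ i, b i * g i := by linear_combination hfinal
  rw [this]
  exact Ideal.sum_mem _ fun i _ => Ideal.mul_mem_left _ _ (Ideal.subset_span ⟨i, rfl⟩)
end

section
/- Let S be a regular F-finite ring of characteristic p with a p-basis x, and let π : S → R = S/J be a surjection. Then Gabber's construction G(R; π(x)) applied to R with the p-generating set π(x) is canonically isomorphic to the J-adic completion of S; in particular the unique lift π_∞ : S → G(R;π(x)) of π compatible with p-generators is the completion map S → Ŝ^J. -/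
universe u

/-!
Write `K i = ker (π_i : S → R_i)`, so that `K 0 = J`. Two inclusions make the filtration `(K i)`
cofinal with the `J`-adic one, so that `lim R_i = lim S ⧸ K i` is the `J`-adic completion.

* `K (i + 1) ≤ K i ^ p`: write `s ∈ K (i + 1)` as `∑ t_b ^ p x^b` in the `p`-basis of `S`;
  since the monomials `π_{i+1}(x)^b` are linearly independent over `R_{i+1}^p`, every
  `π_{i+1}(t_b) ^ p = ι (π_i t_b)` vanishes, and `ι` is injective. Hence `K i ≤ J ^ (p ^ i)`.
* `K i ≤ radical (K (i + 1))`, because `π_{i+1}(s ^ p) = ι (π_i s)`.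
  Hence `J ≤ radical (K i)`, and some power of the finitely generated ideal `J` lies in `K i`.
-/

open RingHom (ker)

section pBasis

variable {p : ℕ} [Fact p.Prime]

theorem mem_pPowers_iff {R : Type*} [CommRing R] [CharP R p] {y : R} :
    y ∈ pPowers R p ↔ ∃ r, r ^ p = y := by
  have hrange : Set.range (fun r : R => r ^ p) = (frobenius R p).range := by
    ext; simp [frobenius_def]
  rw [pPowers, hrange, Subring.closure_eq]
  simp [frobenius_def]

theorem ker_le_pow_of_linearIndependent {S A : Type*} [CommRing S] [CharP S p] [CommRing A]
    (f : S →+* A) {n : ℕ} {x : Fin n → S}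
    (hspan : Submodule.span (pPowers S p)
      (Set.range fun b : Fin n → Fin p => ∏ i, x i ^ (b i : ℕ)) = ⊤)
    (hind : LinearIndependent (pPowers A p)
      (fun b : Fin n → Fin p => ∏ i, f (x i) ^ (b i : ℕ)))
    {I : Ideal S} (hI : ∀ t, f t ^ p = 0 → t ∈ I) :
    ker f ≤ I ^ p := by
  intro s hs
  obtain ⟨c, rfl⟩ := (Submodule.mem_span_range_iff_exists_fun _).mp
    (Submodule.eq_top_iff'.mp hspan s)
  choose t ht using fun b => mem_pPowers_iff.mp (c b).2
  have hc b : c b • ∏ i, x i ^ (b i : ℕ) = t b ^ p * ∏ i, x i ^ (b i : ℕ) := by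
    rw [Subring.smul_def, smul_eq_mul, ht b]
  simp only [hc] at hs ⊢
  have hft : ∀ b, f (t b) ^ p = 0 := by
    have := Fintype.linearIndependent_iff.mp hind
      (fun b => ⟨f (t b) ^ p, Subring.subset_closure ⟨f (t b), rfl⟩⟩) (by
        simpa only [RingHom.mem_ker, map_sum, map_mul, map_pow, map_prod, Subring.smul_def,
          smul_eq_mul] using hs)
    exact fun b => congrArg Subtype.val (this b)
  exact Ideal.sum_mem _ fun b _ => Ideal.mul_mem_right _ _ (Ideal.pow_mem_pow (hI _ (hft b)) p)

end pBasis

section FrobeniusFactorization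

variable {p : ℕ} {S A B : Type*} [CommRing S] [CommRing A] [CommRing B]
  {f : S →+* A} {φ : A →+* B} {ι : B →+* A}

theorem ker_comp_le_radical_ker (hιφ : ∀ a, ι (φ a) = a ^ p) :
    ker (φ.comp f) ≤ (ker f).radical := fun s hs =>
  ⟨p, by rw [RingHom.mem_ker, map_pow, ← hιφ, ← RingHom.comp_apply φ f, hs, map_zero]⟩

theorem mem_ker_comp_of_pow_eq_zero (hιφ : ∀ a, ι (φ a) = a ^ p) (hι : Function.Injective ι)
    {t : S} (ht : f t ^ p = 0) : t ∈ ker (φ.comp f) :=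
  hι <| by rw [RingHom.comp_apply, hιφ, ht, map_zero]

end FrobeniusFactorization

section Filtration

variable {S : Type*} [CommRing S] {K : ℕ → Ideal S}

theorem le_pow_pow_of_succ_le_pow {p : ℕ} (h : ∀ i, K (i + 1) ≤ K i ^ p) (i : ℕ) :
    K i ≤ K 0 ^ p ^ i := by
  induction i with
  | zero => simp
  | succ i ih =>
    calc K (i + 1) ≤ K i ^ p := h i
      _ ≤ (K 0 ^ p ^ i) ^ p := Ideal.pow_right_mono ih p
      _ = K 0 ^ p ^ (i + 1) := by rw [← pow_mul, pow_succ]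

theorem le_radical_of_le_radical_succ (h : ∀ i, K i ≤ (K (i + 1)).radical) (i : ℕ) :
    K 0 ≤ (K i).radical := by
  induction i with
  | zero => exact Ideal.le_radical
  | succ i ih => exact ih.trans <| (Ideal.radical_mono (h i)).trans_eq (Ideal.radical_idem _)

end Filtration

theorem Nat.exists_monotone_forall_le (N : ℕ → ℕ) :
    ∃ M : ℕ → ℕ, Monotone M ∧ ∀ i, i ≤ M i ∧ N i ≤ M i :=
  ⟨fun i => i + (Finset.range (i + 1)).sup N,
    fun _ _ h => add_le_add h (Finset.sup_mono (Finset.range_subset_range.mpr (by omega))),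
    fun i => ⟨Nat.le_add_right _ _,
      (Finset.le_sup (Finset.self_mem_range_succ i)).trans (Nat.le_add_left _ _)⟩⟩

section InverseLimit

variable {R : ℕ → Type*} [∀ i, CommRing (R i)] (φ : ∀ i, R (i + 1) →+* R i)

def IsCompatibleFamily {A : Type*} [CommRing A] (f : ∀ i, A →+* R i) : Prop :=
  ∀ i, (φ i).comp (f (i + 1)) = f i

structure IsInverseLimit {L : Type*} [CommRing L] (proj : ∀ i, L →+* R i) : Prop where
  isCompatibleFamily : IsCompatibleFamily φ proj
  eq_zero_of_forall_proj_eq_zero : ∀ a, (∀ i, proj i a = 0) → a = 0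
  exists_forall_proj_eq :
    ∀ a : ∀ i, R i, (∀ i, φ i (a (i + 1)) = a i) → ∃ b, ∀ i, proj i b = a i

variable {φ} {A B : Type*} [CommRing A] [CommRing B]

namespace IsCompatibleFamily

theorem apply_succ {f : ∀ i, A →+* R i} (hf : IsCompatibleFamily φ f) (i : ℕ) (a : A) :
    φ i (f (i + 1) a) = f i a :=
  RingHom.congr_fun (hf i) a

theorem apply_eq_apply_of_le {f : ∀ i, A →+* R i} {g : ∀ i, B →+* R i}
    (hf : IsCompatibleFamily φ f) (hg : IsCompatibleFamily φ g) {a : A} {b : B} {m k : ℕ}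
    (hmk : m ≤ k) (h : f k a = g k b) : f m a = g m b := by
  induction k, hmk using Nat.le_induction with
  | base => exact h
  | succ k _ ih => exact ih (by rw [← hf.apply_succ, ← hg.apply_succ, h])

end IsCompatibleFamily

namespace IsInverseLimit

variable {L : Type*} [CommRing L] {proj : ∀ i, L →+* R i}

theorem ext (hL : IsInverseLimit φ proj) {a b : L} (h : ∀ i, proj i a = proj i b) : a = b :=
  sub_eq_zero.mp <| hL.eq_zero_of_forall_proj_eq_zero _ fun i => by rw [map_sub, h, sub_self]

noncomputable def lift (hL : IsInverseLimit φ proj) (f : ∀ i, A →+* R i)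
    (hf : IsCompatibleFamily φ f) : A →+* L :=
  have spec a := (hL.exists_forall_proj_eq (f · a) (hf.apply_succ · a)).choose_spec
  { toFun a := (hL.exists_forall_proj_eq (f · a) (hf.apply_succ · a)).choose
    map_one' := hL.ext fun i => by rw [spec, map_one, map_one]
    map_mul' a b := hL.ext fun i => by rw [spec, map_mul, map_mul, spec, spec]
    map_zero' := hL.ext fun i => by rw [spec, map_zero, map_zero]
    map_add' a b := hL.ext fun i => by rw [spec, map_add, map_add, spec, spec] }

theorem proj_lift (hL : IsInverseLimit φ proj) {f : ∀ i, A →+* R i}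
    (hf : IsCompatibleFamily φ f) (i : ℕ) (a : A) : proj i (hL.lift f hf a) = f i a :=
  (hL.exists_forall_proj_eq (f · a) (hf.apply_succ · a)).choose_spec i

theorem eq_lift (hL : IsInverseLimit φ proj) {f : ∀ i, A →+* R i}
    (hf : IsCompatibleFamily φ f) {g : A →+* L} (hg : ∀ i, (proj i).comp g = f i) :
    g = hL.lift f hf :=
  RingHom.ext fun a => hL.ext fun i => by rw [hL.proj_lift, ← hg i, RingHom.comp_apply]

end IsInverseLimit

end InverseLimit

theorem AdicCompletion.mk_eq_evalₐ_of_le {S : Type*} [CommRing S] {J : Ideal S}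
    {c : AdicCompletion J S} {m k : ℕ} (hmk : m ≤ k) {s : S}
    (hs : Ideal.Quotient.mk (J ^ k) s = AdicCompletion.evalₐ J k c) :
    Ideal.Quotient.mk (J ^ m) s = AdicCompletion.evalₐ J m c := by
  obtain ⟨x, rfl⟩ := AdicCompletion.mk_surjective J S c
  have := congrArg (Ideal.Quotient.factorPow J hmk) hs
  simp only [AdicCompletion.evalₐ_mk, Ideal.Quotient.factor_mk] at this ⊢
  rw [this, AdicCompletion.Ideal.mk_eq_mk J hmk x]

section AdicCompletion

variable {R : ℕ → Type*} [∀ i, CommRing (R i)] {φ : ∀ i, R (i + 1) →+* R i}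
  {S L : Type*} [CommRing S] [CommRing L] (J : Ideal S) {π : ∀ i, S →+* R i}
  {proj : ∀ i, L →+* R i}

noncomputable def toQuotientPow (hπsurj : ∀ i, Function.Surjective (π i))
    (hker : ∀ i, ker (π i) ≤ J ^ i) (k : ℕ) : R k →+* S ⧸ J ^ k :=
  (π k).liftOfSurjective (hπsurj k) ⟨Ideal.Quotient.mk _, by rw [Ideal.mk_ker]; exact hker k⟩

theorem toQuotientPow_apply (hπsurj : ∀ i, Function.Surjective (π i))
    (hker : ∀ i, ker (π i) ≤ J ^ i) (k : ℕ) (s : S) :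
    toQuotientPow J hπsurj hker k (π k s) = Ideal.Quotient.mk _ s :=
  (π k).liftOfSurjective_comp_apply (hπsurj k) _ s

theorem IsCompatibleFamily.factorPow_comp_toQuotientPow_comp (hproj : IsCompatibleFamily φ proj)
    (hπ : IsCompatibleFamily φ π) (hπsurj : ∀ i, Function.Surjective (π i))
    (hker : ∀ i, ker (π i) ≤ J ^ i) {m k : ℕ} (hmk : m ≤ k) :
    (Ideal.Quotient.factorPow J hmk).comp ((toQuotientPow J hπsurj hker k).comp (proj k)) =
      (toQuotientPow J hπsurj hker m).comp (proj m) := RingHom.ext fun a => by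
  obtain ⟨s, hs⟩ := hπsurj k (proj k a)
  simp only [RingHom.comp_apply, ← hs, ← hπ.apply_eq_apply_of_le hproj hmk hs,
    toQuotientPow_apply, Ideal.Quotient.factor_mk]

namespace IsCompatibleFamily

variable (hproj : IsCompatibleFamily φ proj) (hπ : IsCompatibleFamily φ π)
  (hπsurj : ∀ i, Function.Surjective (π i)) (hker : ∀ i, ker (π i) ≤ J ^ i)

noncomputable def toAdicCompletion : L →+* AdicCompletion J S :=
  AdicCompletion.liftRingHom J (fun k => (toQuotientPow J hπsurj hker k).comp (proj k))
    (hproj.factorPow_comp_toQuotientPow_comp J hπ hπsurj hker)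

theorem evalₐ_toAdicCompletion {k : ℕ} {a : L} {s : S} (hs : π k s = proj k a) :
    AdicCompletion.evalₐ J k (hproj.toAdicCompletion J hπ hπsurj hker a) =
      Ideal.Quotient.mk _ s := by
  rw [toAdicCompletion, AdicCompletion.evalₐ_liftRingHom, RingHom.comp_apply, ← hs,
    toQuotientPow_apply]

end IsCompatibleFamily

namespace IsInverseLimit

variable {J} (hL : IsInverseLimit φ proj) (hπ : IsCompatibleFamily φ π)
  (hπsurj : ∀ i, Function.Surjective (π i)) (hker : ∀ i, ker (π i) ≤ J ^ i)

theorem toAdicCompletion_comp_lift :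
    (hL.isCompatibleFamily.toAdicCompletion J hπ hπsurj hker).comp (hL.lift π hπ) =
      algebraMap S _ :=
  RingHom.ext fun s => AdicCompletion.ext_evalₐ fun k => by
    rw [RingHom.comp_apply,
      hL.isCompatibleFamily.evalₐ_toAdicCompletion J hπ hπsurj hker (hL.proj_lift hπ k s).symm,
      AdicCompletion.algebraMap_apply, Algebra.algebraMap_self, RingHom.id_apply,
      AdicCompletion.evalₐ_of]

theorem toAdicCompletion_injective (hge : ∀ i, ∃ N, J ^ N ≤ ker (π i)) :
    Function.Injective (hL.isCompatibleFamily.toAdicCompletion J hπ hπsurj hker) := by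
  refine (injective_iff_map_eq_zero _).mpr fun a ha =>
    hL.eq_zero_of_forall_proj_eq_zero a fun i => ?_
  obtain ⟨N, hN⟩ := hge i
  obtain ⟨s, hs⟩ := hπsurj (max N i) (proj (max N i) a)
  have hsJ : s ∈ J ^ max N i := by
    rw [← Ideal.Quotient.eq_zero_iff_mem,
      ← hL.isCompatibleFamily.evalₐ_toAdicCompletion J hπ hπsurj hker hs, ha, map_zero]
  rw [← hπ.apply_eq_apply_of_le hL.isCompatibleFamily (le_max_right N i) hs]
  exact hN (Ideal.pow_le_pow_right (le_max_left N i) hsJ)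

theorem toAdicCompletion_surjective (hge : ∀ i, ∃ N, J ^ N ≤ ker (π i)) :
    Function.Surjective (hL.isCompatibleFamily.toAdicCompletion J hπ hπsurj hker) := by
  intro c
  choose N hN using hge
  obtain ⟨M, hMmono, hM⟩ := Nat.exists_monotone_forall_le N
  have hMker i : J ^ M i ≤ ker (π i) := (Ideal.pow_le_pow_right (hM i).2).trans (hN i)
  choose t ht using fun i => Ideal.Quotient.mk_surjective (AdicCompletion.evalₐ J (M i) c)
  have ht_succ i : φ i (π (i + 1) (t (i + 1))) = π i (t i) := by
    rw [hπ.apply_succ, ← sub_eq_zero, ← map_sub]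
    refine hMker i (Ideal.Quotient.eq.mp ?_)
    rw [AdicCompletion.mk_eq_evalₐ_of_le (hMmono i.le_succ) (ht _), ht]
  obtain ⟨b, hb⟩ := hL.exists_forall_proj_eq (fun i => π i (t i)) ht_succ
  refine ⟨b, AdicCompletion.ext_evalₐ fun k => ?_⟩
  rw [hL.isCompatibleFamily.evalₐ_toAdicCompletion J hπ hπsurj hker (hb k).symm,
    AdicCompletion.mk_eq_evalₐ_of_le (hM k).1 (ht k)]

end IsInverseLimit

end AdicCompletion

theorem gabber_of_quotient_eq_adicCompletion_general (p : ℕ) [Fact p.Prime]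
    {S : Type u} [CommRing S] [IsNoetherianRing S] [CharP S p]
    (n : ℕ) (x : Fin n → S)
    (hspan : Submodule.span (pPowers S p)
      (Set.range fun b : Fin n → Fin p => ∏ i, x i ^ ((b i : ℕ))) = ⊤)
    (J : Ideal S)
    {Rinf : Type u} [CommRing Rinf]
    (Rt : ℕ → Type u) [∀ i, CommRing (Rt i)]
    (φstep : ∀ i, Rt (i + 1) →+* Rt i) (ι : ∀ i, Rt i →+* Rt (i + 1))
    (φproj : ∀ i, Rinf →+* Rt i)
    (hcomp : ∀ i, (φstep i).comp (φproj (i + 1)) = φproj i)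
    (hιinj : ∀ i, Function.Injective (ι i))
    (hιφ : ∀ i (a : Rt (i + 1)), ι i (φstep i a) = a ^ p)
    -- `R_∞` is the inverse limit of the tower:
    (hinj : ∀ a : Rinf, (∀ i, φproj i a = 0) → a = 0)
    (hsurj : ∀ a : ∀ i, Rt i, (∀ i, φstep i (a (i + 1)) = a i) → ∃ b : Rinf, ∀ i, φproj i b = a i)
    -- the lifts `π_i : S → R_i` of the surjection `π₀` with kernel `J`:
    (πt : ∀ i, S →+* Rt i)
    (hπsurj : ∀ i, Function.Surjective (πt i))
    (hπcomp : ∀ i, (φstep i).comp (πt (i + 1)) = πt i)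
    (hπ0ker : RingHom.ker (πt 0) = J)
    -- the `p`-bases of the stages of the tower, images of the `p`-basis `x` of `S`:
    (x' : ∀ i, Fin n → Rt (i + 1))
    (hind' : ∀ i, LinearIndependent (pPowers (Rt (i + 1)) p)
      (fun b : Fin n → Fin p => ∏ j, x' i j ^ ((b j : ℕ))))
    (hπx : ∀ i j, πt (i + 1) (x j) = x' i j) :
    ∃! πinf : S →+* Rinf, (∀ i, (φproj i).comp πinf = πt i) ∧
      ∃ e : Rinf ≃+* AdicCompletion J S,
        (e.toRingHom.comp πinf : S →+* AdicCompletion J S)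
          = algebraMap S (AdicCompletion J S) := by
  have hL : IsInverseLimit φstep φproj := ⟨hcomp, hinj, hsurj⟩
  have hpow i : ker (πt (i + 1)) ≤ ker (πt i) ^ p := by
    rw [← hπcomp i]
    exact ker_le_pow_of_linearIndependent _ hspan (by simpa only [hπx] using hind' i)
      fun t ht => mem_ker_comp_of_pow_eq_zero (hιφ i) (hιinj i) ht
  have hrad i : ker (πt i) ≤ (ker (πt (i + 1))).radical := by
    rw [← hπcomp i]
    exact ker_comp_le_radical_ker (hιφ i)
  have hle i : ker (πt i) ≤ J ^ i :=
    calc ker (πt i) ≤ ker (πt 0) ^ p ^ i :=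
          le_pow_pow_of_succ_le_pow (K := fun i => ker (πt i)) hpow i
      _ = J ^ p ^ i := by rw [hπ0ker]
      _ ≤ J ^ i := Ideal.pow_le_pow_right (Nat.lt_pow_self (Fact.out : p.Prime).one_lt).le
  have hge i : ∃ N, J ^ N ≤ ker (πt i) :=
    Ideal.exists_pow_le_of_le_radical_of_fg
      (hπ0ker ▸ le_radical_of_le_radical_succ (K := fun i => ker (πt i)) hrad i)
      (IsNoetherian.noetherian J)
  let e : Rinf ≃+* AdicCompletion J S := RingEquiv.ofBijective _
    ⟨hL.toAdicCompletion_injective hπcomp hπsurj hle hge,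
      hL.toAdicCompletion_surjective hπcomp hπsurj hle hge⟩
  refine ⟨hL.lift πt hπcomp, ⟨fun i => RingHom.ext (hL.proj_lift hπcomp i), e,
      hL.toAdicCompletion_comp_lift hπcomp hπsurj hle⟩,
    fun πinf ⟨hπinf, _⟩ => hL.eq_lift hπcomp hπinf⟩

/-- **Gabber's construction of a regular ring with `p`-basis surjecting onto `R = S/J` is the
`J`-adic completion of `S`.**
Let `S` be a Noetherian regular `F`-finite ring of characteristic `p` with a `p`-basis `x`,
and let `π₀ : S → R = S/J` be a surjection.  Let `R_∞` (together with projections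
`φproj i : R_∞ → R_i`) be the inverse limit of Gabber's tower `⋯ → R_1 → R_0 = R` attached
to the `p`-generating set `π₀(x)` of `R`, where the lifts `π_i : S → R_i` of `π₀` map the
`p`-basis `x` of `S` bijectively onto the `p`-bases `x' i` of the `R_{i+1}`.
Then the surjection `S → R` factors uniquely through a map `π_∞ : S → R_∞`, and `π_∞` is the
`J`-adic completion map: there is a ring isomorphism `R_∞ ≅ Ŝ^J = AdicCompletion J S`
identifying `π_∞` with the canonical map `S → Ŝ^J`. -/
theorem gabber_of_quotient_eq_adicCompletion (p : ℕ) [Fact p.Prime]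
    {S : Type u} [CommRing S] [IsNoetherianRing S] [CharP S p]
    [Module.Finite (pPowers S p) S]
    (n : ℕ) (x : Fin n → S)
    (hind : LinearIndependent (pPowers S p)
      (fun b : Fin n → Fin p => ∏ i, x i ^ ((b i : ℕ))))
    (hspan : Submodule.span (pPowers S p)
      (Set.range fun b : Fin n → Fin p => ∏ i, x i ^ ((b i : ℕ))) = ⊤)
    (J : Ideal S)
    {Rinf : Type u} [CommRing Rinf] [CharP Rinf p]
    (Rt : ℕ → Type u) [∀ i, CommRing (Rt i)] [∀ i, CharP (Rt i) p]
    (φstep : ∀ i, Rt (i + 1) →+* Rt i) (ι : ∀ i, Rt i →+* Rt (i + 1))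
    (φproj : ∀ i, Rinf →+* Rt i)
    (hcomp : ∀ i, (φstep i).comp (φproj (i + 1)) = φproj i)
    (hιinj : ∀ i, Function.Injective (ι i))
    (hιφ : ∀ i (a : Rt (i + 1)), ι i (φstep i a) = a ^ p)
    (hφι : ∀ i (r : Rt i), φstep i (ι i r) = r ^ p)
    -- `R_∞` is the inverse limit of the tower:
    (hinj : ∀ a : Rinf, (∀ i, φproj i a = 0) → a = 0)
    (hsurj : ∀ a : ∀ i, Rt i, (∀ i, φstep i (a (i + 1)) = a i) → ∃ b : Rinf, ∀ i, φproj i b = a i)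
    -- the lifts `π_i : S → R_i` of the surjection `π₀` with kernel `J`:
    (πt : ∀ i, S →+* Rt i)
    (hπsurj : ∀ i, Function.Surjective (πt i))
    (hπcomp : ∀ i, (φstep i).comp (πt (i + 1)) = πt i)
    (hπ0ker : RingHom.ker (πt 0) = J)
    -- the `p`-bases of the stages of the tower, images of the `p`-basis `x` of `S`:
    (x' : ∀ i, Fin n → Rt (i + 1))
    (hind' : ∀ i, LinearIndependent (pPowers (Rt (i + 1)) p)
      (fun b : Fin n → Fin p => ∏ j, x' i j ^ ((b j : ℕ))))
    (hspan' : ∀ i, Submodule.span (pPowers (Rt (i + 1)) p)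
      (Set.range fun b : Fin n → Fin p => ∏ j, x' i j ^ ((b j : ℕ))) = ⊤)
    (hπx : ∀ i j, πt (i + 1) (x j) = x' i j) :
    ∃! πinf : S →+* Rinf, (∀ i, (φproj i).comp πinf = πt i) ∧
      ∃ e : Rinf ≃+* AdicCompletion J S,
        (e.toRingHom.comp πinf : S →+* AdicCompletion J S)
          = algebraMap S (AdicCompletion J S) :=
  gabber_of_quotient_eq_adicCompletion_general p n x hspan J Rt φstep ι φproj hcomp hιinj hιφ hinj
    hsurj πt hπsurj hπcomp hπ0ker x' hind' hπx
end

section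
/- Let R be a commutative ring of characteristic p with a p-basis x_1,...,x_n, viewed via the finite free extension R^p ⊆ R. Then Hom_{R^p}(R, R^p) is a free R-module of rank one, generated by the R^p-linear projection onto the coefficient of the monomial x_1^{p−1}···x_n^{p−1} in the p-basis expansion. -/
/-!
The top coefficient `Φ` of the `p`-basis expansion pairs the monomials `x^w` and
`x^(p-1-v)` to `δ_{wv}`: the product is `x^(p-1)` when `w = v`, and otherwise a `p`-th power
times a monomial other than `x^(p-1)`. So `b` and `v ↦ x^(p-1-v)` are dual bases for the pairing
`(r, s) ↦ Φ (r * s)`, which makes `r ↦ Φ (r * ·)` an isomorphism onto `Hom_{R^p}(R, R^p)`.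
-/

namespace Module.Basis

variable {S R ι : Type*} [CommRing S] [CommRing R] [Algebra S R] [Fintype ι] [DecidableEq ι]
  (b : Basis ι S R) {Φ : R →ₗ[S] S} {d : ι → R}

theorem apply_mul_eq_repr (hd : ∀ w v, Φ (b w * d v) = if w = v then 1 else 0)
    (s : R) (v : ι) : Φ (s * d v) = b.repr s v := by
  conv_lhs => rw [← b.sum_repr s]
  simp only [Finset.sum_mul, map_sum, smul_mul_assoc, map_smul, hd, smul_eq_mul, mul_ite,
    mul_one, mul_zero, Finset.sum_ite_eq', Finset.mem_univ, if_true]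

theorem existsUnique_eq_apply_mul (hd : ∀ w v, Φ (b w * d v) = if w = v then 1 else 0)
    (ψ : R →ₗ[S] S) : ∃! r : R, ∀ a, ψ a = Φ (r * a) := by
  set r₀ := ∑ w, ψ (b w) • d w
  have hr₀ : ∀ a, ψ a = Φ (r₀ * a) := by
    suffices ψ = Φ ∘ₗ LinearMap.mulLeft S r₀ from fun a => LinearMap.congr_fun this a
    refine b.ext fun v => ?_
    simp [r₀, mul_comm _ (b v), Finset.mul_sum, hd]
  refine ⟨r₀, hr₀, fun r hr => b.repr.injective ?_⟩
  ext v
  rw [← b.apply_mul_eq_repr hd, ← b.apply_mul_eq_repr hd, ← hr, ← hr₀]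

end Module.Basis

theorem Fin.val_add_rev_eq_sub_one_iff {p : ℕ} [NeZero p] (a c : Fin p) :
    ((a + c.rev : Fin p) : ℕ) = p - 1 ↔ a = c := by
  rw [Fin.val_add, Fin.val_rev, Fin.ext_iff]
  have ha := a.isLt
  have hc := c.isLt
  rcases le_or_gt (a : ℕ) c with hac | hac
  · rw [Nat.mod_eq_of_lt (by omega)]
    omega
  · rw [Nat.mod_eq_sub_mod (by omega), Nat.mod_eq_of_lt (by omega)]
    omega

theorem pow_mem_pPowers {R : Type*} [CommRing R] (p : ℕ) (r : R) : r ^ p ∈ pPowers R p :=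
  Subring.subset_closure ⟨r, rfl⟩

section PBasis

variable {p : ℕ} {R : Type*} [CommRing R] {n : ℕ} {x : Fin n → R}
  {b : Module.Basis (Fin n → Fin p) (pPowers R p) R}

theorem basis_mul_basis (hb : ∀ v, b v = ∏ i, x i ^ (v i : ℕ)) (u w : Fin n → Fin p) :
    b u * b w = (⟨(∏ i, x i ^ ((u i + w i : ℕ) / p)) ^ p, pow_mem_pPowers p _⟩ : pPowers R p) •
      b (u + w) := by
  simp only [Subring.smul_def, smul_eq_mul, hb]
  rw [← Finset.prod_pow, ← Finset.prod_mul_distrib, ← Finset.prod_mul_distrib]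
  refine Finset.prod_congr rfl fun i _ => ?_
  rw [Pi.add_apply, Fin.val_add, ← pow_mul, ← pow_add, ← pow_add, Nat.div_add_mod']

variable [NeZero p]

def topExponent (n p : ℕ) [NeZero p] : Fin n → Fin p :=
  fun _ => ⟨p - 1, Nat.sub_one_lt (NeZero.ne p)⟩

theorem basis_mul_basis_rev_self (hb : ∀ v, b v = ∏ i, x i ^ (v i : ℕ)) (w : Fin n → Fin p) :
    b w * b (fun i => (w i).rev) = b (topExponent n p) := by
  simp only [hb, ← Finset.prod_mul_distrib, ← pow_add]
  refine Finset.prod_congr rfl fun i _ => ?_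
  have := (w i).isLt
  rw [Fin.val_rev]
  change x i ^ ((w i : ℕ) + (p - (w i + 1))) = x i ^ (p - 1)
  congr 1
  omega

theorem coord_topExponent_basis_mul_basis_rev (hb : ∀ v, b v = ∏ i, x i ^ (v i : ℕ))
    (w v : Fin n → Fin p) :
    b.coord (topExponent n p) (b w * b (fun i => (v i).rev)) = if w = v then 1 else 0 := by
  split_ifs with hwv
  · rw [hwv, basis_mul_basis_rev_self hb, Module.Basis.coord_apply, Module.Basis.repr_self,
      Finsupp.single_eq_same]
  · rw [basis_mul_basis hb, map_smul, Module.Basis.coord_apply, Module.Basis.repr_self,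
      Finsupp.single_apply, if_neg, smul_zero]
    refine fun htop => hwv (funext fun i => ?_)
    exact (Fin.val_add_rev_eq_sub_one_iff _ _).mp (congrArg Fin.val (congrFun htop i))

end PBasis

theorem hom_to_pPowers_free_rank_one_general (p : ℕ) [Fact p.Prime]
    {R : Type*} [CommRing R] (n : ℕ) (x : Fin n → R)
    (b : Module.Basis (Fin n → Fin p) (pPowers R p) R)
    (hb : ∀ v : Fin n → Fin p, b v = ∏ i, x i ^ ((v i : ℕ))) :
    ∃ Φ : R →ₗ[pPowers R p] (pPowers R p),
      (∀ v : Fin n → Fin p,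
        Φ (∏ i, x i ^ ((v i : ℕ))) = if (∀ i, (v i : ℕ) = p - 1) then 1 else 0) ∧
      ∀ ψ : R →ₗ[pPowers R p] (pPowers R p), ∃! r : R, ∀ a : R, ψ a = Φ (r * a) := by
  refine ⟨b.coord (topExponent n p), fun v => ?_,
    b.existsUnique_eq_apply_mul (coord_topExponent_basis_mul_basis_rev hb)⟩
  simp [← hb, Module.Basis.coord_apply, Finsupp.single_apply, topExponent, funext_iff,
    Fin.ext_iff]

/-- Let `R` be of characteristic `p` with a `p`-basis `x_1, …, x_n`, viewed via the finite
free extension `R^p ⊆ R`.  Then `Hom_{R^p}(R, R^p)` is a free `R`-module of rank one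
(where `R` acts by premultiplication in the source), generated by the `R^p`-linear
projection `Φ` onto the coefficient of the monomial `x_1^{p−1} ⋯ x_n^{p−1}` in the
`p`-basis expansion. -/
theorem hom_to_pPowers_free_rank_one (p : ℕ) [Fact p.Prime]
    {R : Type*} [CommRing R] [CharP R p] (n : ℕ) (x : Fin n → R)
    (b : Module.Basis (Fin n → Fin p) (pPowers R p) R)
    (hb : ∀ v : Fin n → Fin p, b v = ∏ i, x i ^ ((v i : ℕ))) :
    ∃ Φ : R →ₗ[pPowers R p] (pPowers R p),
      (∀ v : Fin n → Fin p,
        Φ (∏ i, x i ^ ((v i : ℕ))) = if (∀ i, (v i : ℕ) = p - 1) then 1 else 0) ∧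
      ∀ ψ : R →ₗ[pPowers R p] (pPowers R p), ∃! r : R, ∀ a : R, ψ a = Φ (r * a) :=
  hom_to_pPowers_free_rank_one_general p n x b hb
end

section
/- Let R = 𝔽_2[x,y]/(y² + xy + y + x³ + x + 1). Then the ideal Q = (x+1, y+1) of R is not principal. -/
set_option synthInstance.maxHeartbeats 1000000

/-- The defining equation `y² + xy + y + x³ + x + 1` of an affine chart of an ordinary
elliptic curve over `𝔽₂` (with `x = X 0`, `y = X 1`). -/
noncomputable def ellipticEquation : MvPolynomial (Fin 2) (ZMod 2) :=
  (MvPolynomial.X 1) ^ 2 + (MvPolynomial.X 0) * (MvPolynomial.X 1) +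
    MvPolynomial.X 1 + (MvPolynomial.X 0) ^ 3 + MvPolynomial.X 0 + 1

/-- `R = 𝔽₂[x,y]/(y² + xy + y + x³ + x + 1)`, an affine chart of an ordinary elliptic
curve over `𝔽₂`. -/
noncomputable def EllipticChartRing : Type :=
  MvPolynomial (Fin 2) (ZMod 2) ⧸ (Ideal.span {ellipticEquation})

noncomputable instance : CommRing EllipticChartRing :=
  Ideal.Quotient.commRing _

/-!
`R` is the quadratic algebra `𝔽₂[x][ω]`, `ω² = (x³ + x + 1) + (x + 1)ω`, whose norm
`N(u + vω) = u² + (x + 1)uv - (x³ + x + 1)v²` is multiplicative. A generator `g` of `Q` would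
have `N g` dividing `N(x + 1) = (x + 1)²` and `N(ω + 1) = x³ + 1`, hence dividing `x + 1`, while
`x + 1 ∣ N g` because `g` vanishes at `(1, 1)`. So `N g` would have degree `1`. But since
`x³ + x + 1` has odd degree, the leading terms of `u²` and `(x³ + x + 1)v²` never cancel: the
degree of `N(u + vω)` is `2 deg u` if `v = 0` and at least `3` otherwise.
-/

open Polynomial
open scoped QuadraticAlgebra

namespace QuadraticAlgebra

variable {R T : Type*} [CommRing R] [CommRing T] {a b : R}

@[simps]
def evalRingHom (f : R →+* T) (u : T) (hu : u * u = f a + f b * u) :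
    QuadraticAlgebra R a b →+* T where
  toFun z := f z.re + f z.im * u
  map_one' := by simp
  map_zero' := by simp
  map_add' z w := by simp only [re_add, im_add, map_add]; ring
  map_mul' z w := by
    simp only [re_mul, im_mul, map_add, map_mul]
    linear_combination (-(f z.im * f w.im)) * hu

theorem natDegree_norm_eq_max {K : Type*} [CommRing K] [NoZeroDivisors K] {a b : K[X]}
    (ha : Odd a.natDegree) (hb : 2 * b.natDegree ≤ a.natDegree)
    {z : QuadraticAlgebra K[X] a b} (hz : z.im ≠ 0) :
    z.norm.natDegree = max (2 * z.re.natDegree) (2 * z.im.natDegree + a.natDegree) := by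
  have ha0 : a ≠ 0 := fun h ↦ by simp [h] at ha
  have hmid : (b * z.re * z.im).natDegree ≤ b.natDegree + z.re.natDegree + z.im.natDegree := by
    grw [natDegree_mul_le, natDegree_mul_le]
  have hre : (z.re * z.re).natDegree = 2 * z.re.natDegree := by
    rcases eq_or_ne z.re 0 with h | h
    · simp [h]
    · rw [natDegree_mul h h, two_mul]
  have him : (a * z.im * z.im).natDegree = 2 * z.im.natDegree + a.natDegree := by
    rw [natDegree_mul (mul_ne_zero ha0 hz) hz, natDegree_mul ha0 hz]; ring
  have hpar : 2 * z.re.natDegree ≠ 2 * z.im.natDegree + a.natDegree := by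
    obtain ⟨k, hk⟩ := ha; omega
  rw [norm_def]
  rcases hpar.lt_or_gt with hlt | hgt
  · have hlead : (z.re * z.re + b * z.re * z.im).natDegree < (a * z.im * z.im).natDegree := by
      rw [him]
      refine (natDegree_add_le _ _).trans_lt (max_lt (hre ▸ hlt) (hmid.trans_lt ?_))
      omega
    rw [natDegree_sub_eq_right_of_natDegree_lt hlead, him, max_eq_right hlt.le]
  · have hlead : (b * z.re * z.im - a * z.im * z.im).natDegree < (z.re * z.re).natDegree := by
      rw [hre]
      refine (natDegree_sub_le _ _).trans_lt (max_lt (hmid.trans_lt ?_) (him ▸ hgt))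
      omega
    rw [add_sub_assoc, natDegree_add_eq_left_of_natDegree_lt hlead, hre, max_eq_left hgt.le]

end QuadraticAlgebra

theorem Ideal.map_span_pair {R S : Type*} [Semiring R] [Semiring S] (f : R →+* S) (x y : R) :
    (Ideal.span {x, y}).map f = Ideal.span {f x, f y} := by
  rw [Ideal.map_span, Set.image_pair]

abbrev EllipticQuadraticAlgebra := QuadraticAlgebra (ZMod 2)[X] (X ^ 3 + X + 1) (X + 1)

namespace EllipticQuadraticAlgebra

instance : CharP EllipticQuadraticAlgebra 2 :=
  charP_of_injective_ringHom (algebraMap (ZMod 2) _).injective 2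

lemma aeval_ellipticEquation :
    MvPolynomial.aeval ![algebraMap (ZMod 2)[X] EllipticQuadraticAlgebra X, ω]
      ellipticEquation = 0 := by
  simp only [ellipticEquation, map_add, map_mul, map_pow, map_one, MvPolynomial.aeval_X,
    Matrix.cons_val_zero, Matrix.cons_val_one, pow_two ω,
    QuadraticAlgebra.omega_mul_omega_eq_algebraMap]
  set x := algebraMap (ZMod 2)[X] EllipticQuadraticAlgebra X
  linear_combination
    (x ^ 3 + x + 1 + (x + 1) * ω) * CharTwo.two_eq_zero (R := EllipticQuadraticAlgebra)

noncomputable def evalOneOne : EllipticQuadraticAlgebra →+* ZMod 2 :=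
  QuadraticAlgebra.evalRingHom (Polynomial.evalRingHom 1) 1
    (by simp [show (1 + 1 : ZMod 2) = 0 from rfl])

lemma evalOneOne_algebraMap (p : (ZMod 2)[X]) : evalOneOne (algebraMap _ _ p) = p.eval 1 := by
  simp [evalOneOne]

lemma evalOneOne_omega : evalOneOne ω = 1 := by
  simp [evalOneOne]

lemma norm_omega_add_one : (ω + 1 : EllipticQuadraticAlgebra).norm = X ^ 3 + 1 := by
  rw [QuadraticAlgebra.norm_def]
  simp only [QuadraticAlgebra.re_add, QuadraticAlgebra.omega_re, QuadraticAlgebra.re_one,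
    QuadraticAlgebra.im_add, QuadraticAlgebra.omega_im, QuadraticAlgebra.im_one]
  linear_combination (-X ^ 3 : (ZMod 2)[X]) * CharTwo.two_eq_zero (R := (ZMod 2)[X])

lemma natDegree_norm_ne_one (z : EllipticQuadraticAlgebra) : z.norm.natDegree ≠ 1 := by
  have ha : (X ^ 3 + X + 1 : (ZMod 2)[X]).natDegree = 3 := by compute_degree!
  have hb : (X + 1 : (ZMod 2)[X]).natDegree = 1 := by compute_degree!
  rcases eq_or_ne z.im 0 with h | h
  · have : z.norm = z.re ^ 2 := by simp [QuadraticAlgebra.norm_def, h, pow_two]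
    rw [this, natDegree_pow]
    omega
  · rw [QuadraticAlgebra.natDegree_norm_eq_max (by rw [ha]; decide) (by rw [ha, hb]; decide) h,
      ha]
    omega

noncomputable def pointIdeal : Ideal EllipticQuadraticAlgebra :=
  Ideal.span {algebraMap (ZMod 2)[X] EllipticQuadraticAlgebra (X + 1), ω + 1}

lemma pointIdeal_le_ker_evalOneOne : pointIdeal ≤ RingHom.ker evalOneOne := by
  refine Ideal.span_le.mpr ?_
  rintro _ (rfl | rfl)
  · rw [SetLike.mem_coe, RingHom.mem_ker, evalOneOne_algebraMap, eval_add, eval_X, eval_one]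
    rfl
  · rw [SetLike.mem_coe, RingHom.mem_ker, map_add, evalOneOne_omega, map_one]
    rfl

lemma X_add_one_dvd_norm_of_mem_pointIdeal {g : EllipticQuadraticAlgebra} (hg : g ∈ pointIdeal) :
    X + 1 ∣ g.norm := by
  have hroot : g.norm.IsRoot 1 := by
    rw [IsRoot, ← evalOneOne_algebraMap, QuadraticAlgebra.algebraMap_norm_eq_mul_star, map_mul,
      RingHom.mem_ker.mp (pointIdeal_le_ker_evalOneOne hg), zero_mul]
  have hX : (X + 1 : (ZMod 2)[X]) = X - C 1 := by rw [map_one, sub_eq_add_neg, CharTwo.neg_eq]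
  exact (dvd_of_eq hX).trans (dvd_iff_isRoot.mpr hroot)

lemma norm_dvd_X_add_one_of_dvd_generators {g : EllipticQuadraticAlgebra}
    (hx : g ∣ algebraMap (ZMod 2)[X] _ (X + 1)) (hy : g ∣ ω + 1) : g.norm ∣ X + 1 := by
  have h₁ : g.norm ∣ (X + 1) ^ 2 := by
    simpa only [QuadraticAlgebra.norm_algebraMap] using map_dvd QuadraticAlgebra.norm hx
  have h₂ : g.norm ∣ X ^ 3 + 1 := by
    simpa only [norm_omega_add_one] using map_dvd QuadraticAlgebra.norm hy
  have hbezout : X ^ 3 + 1 + X * (X + 1) ^ 2 = (X + 1 : (ZMod 2)[X]) := by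
    linear_combination (X ^ 3 + X ^ 2 : (ZMod 2)[X]) * CharTwo.two_eq_zero (R := (ZMod 2)[X])
  exact (dvd_add h₂ (h₁.mul_left X)).trans (dvd_of_eq hbezout)

theorem not_isPrincipal_pointIdeal : ¬ pointIdeal.IsPrincipal := by
  rintro ⟨g, hg⟩
  rw [Ideal.submodule_span_eq] at hg
  have hgen : ∀ w ∈ pointIdeal, g ∣ w := fun w hw ↦ Ideal.mem_span_singleton.mp (hg ▸ hw)
  have hdvd := norm_dvd_X_add_one_of_dvd_generators (hgen _ (Ideal.subset_span (.inl rfl)))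
    (hgen _ (Ideal.subset_span (.inr rfl)))
  have hroot := X_add_one_dvd_norm_of_mem_pointIdeal (hg ▸ Ideal.mem_span_singleton_self g)
  apply natDegree_norm_ne_one g
  refine (natDegree_eq_of_degree_eq
    (degree_eq_degree_of_associated (associated_of_dvd_dvd hdvd hroot))).trans ?_
  compute_degree!

end EllipticQuadraticAlgebra

noncomputable def EllipticChartRing.toQuadraticAlgebra :
    EllipticChartRing →+* EllipticQuadraticAlgebra :=
  Ideal.Quotient.lift _
    (MvPolynomial.aeval ![algebraMap (ZMod 2)[X] EllipticQuadraticAlgebra X, ω]).toRingHom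
    fun p hp ↦ by
      obtain ⟨c, rfl⟩ := Ideal.mem_span_singleton'.mp hp
      simp [EllipticQuadraticAlgebra.aeval_ellipticEquation]

lemma EllipticChartRing.toQuadraticAlgebra_mk (p : MvPolynomial (Fin 2) (ZMod 2)) :
    toQuadraticAlgebra (Ideal.Quotient.mk _ p) =
      MvPolynomial.aeval ![algebraMap (ZMod 2)[X] EllipticQuadraticAlgebra X, ω] p :=
  Ideal.Quotient.lift_mk _ _ _

/-- In `R = 𝔽₂[x,y]/(y² + xy + y + x³ + x + 1)`, the ideal `Q = (x+1, y+1)` is not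
principal. -/
theorem ellipticChart_ideal_not_principal :
    ¬ Submodule.IsPrincipal
      (Ideal.span
        {Ideal.Quotient.mk (Ideal.span {ellipticEquation}) (MvPolynomial.X 0 + 1),
         Ideal.Quotient.mk (Ideal.span {ellipticEquation}) (MvPolynomial.X 1 + 1)}
        : Ideal EllipticChartRing) := by
  intro h
  have hx : EllipticChartRing.toQuadraticAlgebra (Ideal.Quotient.mk _ (MvPolynomial.X 0 + 1)) =
      algebraMap (ZMod 2)[X] EllipticQuadraticAlgebra (X + 1) := by
    rw [EllipticChartRing.toQuadraticAlgebra_mk]; simp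
  have hy : EllipticChartRing.toQuadraticAlgebra (Ideal.Quotient.mk _ (MvPolynomial.X 1 + 1)) =
      ω + 1 := by
    rw [EllipticChartRing.toQuadraticAlgebra_mk]; simp
  have := h.map_ringHom EllipticChartRing.toQuadraticAlgebra
  -- `erw`: the set literal in the statement lives over the quotient type, not `EllipticChartRing`
  erw [Ideal.map_span_pair, hx, hy] at this
  exact EllipticQuadraticAlgebra.not_isPrincipal_pointIdeal this
end
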